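/- (Duality between the Radon transform and the back projection) Let N ≥ 2 and let f, h : ℝ^N → ℝ be Schwartz functions. Then ∫_{S^{N−1}} ∫_ℝ Rf(X,ξ) · Rh(X,ξ) dX dσ(ξ) = ∫_{ℝ^N} f(x) · I(Rh)(x) dx, where σ is the rotation-invariant probability measure on S^{N−1}. -/

import Mathlib

open MeasureTheory Metric
open scoped RealInnerProductSpace

noncomputable def radonTransform {N : ℕ} (f : EuclideanSpace ℝ (Fin N) → ℝ)
    (X : ℝ) (ξ : EuclideanSpace ℝ (Fin N)) : ℝ :=
  ∫ y : ((ℝ ∙ ξ)ᗮ : Submodule ℝ (EuclideanSpace ℝ (Fin N))),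
    f (X • ξ + (y : EuclideanSpace ℝ (Fin N)))

noncomputable def sphereMeasure (N : ℕ) :
    Measure (sphere (0 : EuclideanSpace ℝ (Fin N)) 1) :=
  ((volume : Measure (EuclideanSpace ℝ (Fin N))).toSphere Set.univ)⁻¹ •
    (volume : Measure (EuclideanSpace ℝ (Fin N))).toSphere

noncomputable def backProjection {N : ℕ}
    (g : ℝ → EuclideanSpace ℝ (Fin N) → ℝ) (x : EuclideanSpace ℝ (Fin N)) : ℝ :=
  ∫ ξ : sphere (0 : EuclideanSpace ℝ (Fin N)) 1,
    g ⟪(ξ : EuclideanSpace ℝ (Fin N)), x⟫ (ξ : EuclideanSpace ℝ (Fin N)) ∂(sphereMeasure N)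

/-! Slicing `ℝᴺ` into the lines `ℝ ξ` and the hyperplanes `ξᗮ` (Fubini for the measure-preserving
decomposition `ℝ × ξᗮ ≃ ℝᴺ`) turns `∫ Rf(X, ξ) G(X) dX` into `∫ f(x) G(⟪ξ, x⟫) dx` for every
direction `ξ`; for `G = Rh(·, ξ)` it remains to swap the integrals over `ξ` and `x`. Fubini
applies because `Rh` is bounded uniformly in `(X, ξ)`, the decay of `h` being integrable on every
hyperplane, and jointly measurable: averaging against a Gaussian in the direction `ξ` writes
`Rh(X, ξ)` as an integral over all of `ℝᴺ` of a function continuous in `(X, ξ, z)`. -/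

theorem SchwartzMap.exists_norm_le_mul_one_add_norm_rpow_neg {F G : Type*}
    [NormedAddCommGroup F] [NormedSpace ℝ F] [NormedAddCommGroup G] [NormedSpace ℝ G]
    (h : SchwartzMap F G) (k : ℕ) :
    ∃ C, 0 ≤ C ∧ ∀ x, ‖h x‖ ≤ C * (1 + ‖x‖) ^ (-(k : ℝ)) := by
  refine ⟨2 ^ k * ((Finset.Iic (k, 0)).sup fun m => SchwartzMap.seminorm ℝ m.1 m.2) h,
    by positivity, fun x => ?_⟩
  have hx := SchwartzMap.one_add_le_sup_seminorm_apply (𝕜 := ℝ) (m := (k, 0)) le_rfl le_rfl h x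
  rw [norm_iteratedFDeriv_zero] at hx
  rw [Real.rpow_neg (by positivity), Real.rpow_natCast, ← div_eq_mul_inv,
    le_div_iff₀ (by positivity), mul_comm]
  exact hx

section OrthogonalDecomposition

variable {E : Type*} [NormedAddCommGroup E] [InnerProductSpace ℝ E]

theorem norm_le_norm_add_of_inner_eq_zero {x y : E} (h : ⟪x, y⟫ = 0) : ‖y‖ ≤ ‖x + y‖ := by
  have := norm_add_sq_eq_norm_sq_add_norm_sq_real h
  nlinarith [norm_nonneg y, norm_nonneg (x + y), mul_self_nonneg ‖x‖]

theorem inner_smul_add_of_mem_orthogonal {ξ : E} (hξ : ‖ξ‖ = 1) (t : ℝ) {y : E}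
    (hy : y ∈ (ℝ ∙ ξ)ᗮ) : ⟪ξ, t • ξ + y⟫ = t := by
  rw [inner_add_right, real_inner_smul_right, real_inner_self_eq_norm_sq, hξ,
    Submodule.mem_orthogonal_singleton_iff_inner_right.1 hy]
  ring

variable [FiniteDimensional ℝ E]

theorem finrank_orthogonal_span_singleton_add_one {ξ : E} (hξ : ξ ≠ 0) :
    Module.finrank ℝ (ℝ ∙ ξ)ᗮ + 1 = Module.finrank ℝ E := by
  rw [← finrank_span_singleton (K := ℝ) hξ, add_comm]
  exact (ℝ ∙ ξ).finrank_add_finrank_orthogonal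

variable [MeasurableSpace E] [BorelSpace E]

theorem LinearIsometryEquiv.integral_comp_norm {V G : Type*}
    [NormedAddCommGroup V] [InnerProductSpace ℝ V] [FiniteDimensional ℝ V]
    [MeasurableSpace V] [BorelSpace V] [NormedAddCommGroup G] [NormedSpace ℝ G]
    (e : E ≃ₗᵢ[ℝ] V) (g : ℝ → G) : ∫ x : E, g ‖x‖ = ∫ v : V, g ‖v‖ := by
  rw [← e.measurePreserving.integral_comp e.toHomeomorph.measurableEmbedding]
  simp

noncomputable def lineProdOrthogonalEquiv (ξ : E) (hξ : ‖ξ‖ = 1) : ℝ × (ℝ ∙ ξ)ᗮ ≃ᵐ E :=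
  ((LinearIsometryEquiv.toSpanUnitSingleton ξ hξ).toMeasurableEquiv.prodCongr
      (MeasurableEquiv.refl _)).trans
    ((MeasurableEquiv.toLp 2 _).trans (ℝ ∙ ξ).orthogonalDecomposition.symm.toMeasurableEquiv)

@[simp]
theorem lineProdOrthogonalEquiv_apply {ξ : E} (hξ : ‖ξ‖ = 1) (p : ℝ × (ℝ ∙ ξ)ᗮ) :
    lineProdOrthogonalEquiv ξ hξ p = p.1 • ξ + p.2 := by
  simp [lineProdOrthogonalEquiv, MeasurableEquiv.prodCongr]

theorem measurePreserving_lineProdOrthogonalEquiv {ξ : E} (hξ : ‖ξ‖ = 1) :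
    MeasurePreserving (lineProdOrthogonalEquiv ξ hξ) :=
  (ℝ ∙ ξ).orthogonalDecomposition.symm.measurePreserving.comp <|
    (WithLp.volume_preserving_toLp _ _).comp <|
      (LinearIsometryEquiv.toSpanUnitSingleton ξ hξ).measurePreserving.prod (.id volume)

theorem integral_eq_integral_integral_orthogonal {G : Type*} [NormedAddCommGroup G]
    [NormedSpace ℝ G] {ξ : E} (hξ : ‖ξ‖ = 1) {g : E → G} (hg : Integrable g) :
    ∫ x, g x = ∫ t : ℝ, ∫ y : (ℝ ∙ ξ)ᗮ, g (t • ξ + y) := by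
  have he := measurePreserving_lineProdOrthogonalEquiv hξ
  have hge : Integrable (fun p => g (lineProdOrthogonalEquiv ξ hξ p)) (volume.prod volume) :=
    (he.integrable_comp_emb (MeasurableEquiv.measurableEmbedding _)).2 hg
  rw [← he.integral_comp', Measure.volume_eq_prod, integral_prod _ hge]
  simp

theorem integral_mul_comp_inner_sub {ξ : E} (hξ : ‖ξ‖ = 1) (φ : ℝ → ℝ) (g : E → ℝ) :
    ∫ z, φ ⟪ξ, z⟫ * g (z - ⟪ξ, z⟫ • ξ) = (∫ t, φ t) * ∫ y : (ℝ ∙ ξ)ᗮ, g y := by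
  rw [← (measurePreserving_lineProdOrthogonalEquiv hξ).integral_comp', Measure.volume_eq_prod,
    ← integral_prod_mul]
  congr 1 with p
  simp [inner_smul_add_of_mem_orthogonal hξ p.1 p.2.2]

end OrthogonalDecomposition

section Radon

variable {N : ℕ}

local notation "ℝᴺ" => EuclideanSpace ℝ (Fin N)

theorem radonTransform_eq_integral_gaussian_mul {ξ : ℝᴺ} (hξ : ‖ξ‖ = 1) (g : ℝᴺ → ℝ) (X : ℝ) :
    radonTransform g X ξ =
      ∫ z, Real.exp (-Real.pi * ⟪ξ, z⟫ ^ 2) * g (X • ξ + (z - ⟪ξ, z⟫ • ξ)) := by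
  rw [integral_mul_comp_inner_sub hξ (fun t => Real.exp (-Real.pi * t ^ 2))
    (fun w => g (X • ξ + w)), integral_gaussian, div_self Real.pi_ne_zero, Real.sqrt_one, one_mul,
    radonTransform]

theorem stronglyMeasurable_radonTransform {g : ℝᴺ → ℝ} (hg : Continuous g) :
    StronglyMeasurable fun p : ℝ × sphere (0 : ℝᴺ) 1 => radonTransform g p.1 p.2 := by
  have hF : Continuous fun q : (ℝ × sphere (0 : ℝᴺ) 1) × ℝᴺ =>
      Real.exp (-Real.pi * ⟪(q.1.2 : ℝᴺ), q.2⟫ ^ 2) *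
        g (q.1.1 • (q.1.2 : ℝᴺ) + (q.2 - ⟪(q.1.2 : ℝᴺ), q.2⟫ • (q.1.2 : ℝᴺ))) := by
    fun_prop
  convert hF.stronglyMeasurable.integral_prod_right' (ν := volume) with p
  exact radonTransform_eq_integral_gaussian_mul (norm_eq_of_mem_sphere p.2) g p.1

theorem exists_abs_radonTransform_le (h : SchwartzMap ℝᴺ ℝ) :
    ∃ M, ∀ ξ : ℝᴺ, ‖ξ‖ = 1 → ∀ X, |radonTransform (fun y => h y) X ξ| ≤ M := by
  obtain ⟨C, hC0, hC⟩ := h.exists_norm_le_mul_one_add_norm_rpow_neg N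
  refine ⟨C * ∫ w : EuclideanSpace ℝ (Fin (N - 1)), (1 + ‖w‖) ^ (-(N : ℝ)), fun ξ hξ X => ?_⟩
  have hK : Module.finrank ℝ (ℝ ∙ ξ)ᗮ + 1 = N := by
    rw [finrank_orthogonal_span_singleton_add_one (norm_ne_zero_iff.1 (hξ.trans_ne one_ne_zero)),
      finrank_euclideanSpace_fin]
  have hdecay : ∀ y : (ℝ ∙ ξ)ᗮ, ‖h (X • ξ + y)‖ ≤ C * (1 + ‖y‖) ^ (-(N : ℝ)) := fun y => by
    have hy : ‖(y : ℝᴺ)‖ ≤ ‖X • ξ + y‖ := norm_le_norm_add_of_inner_eq_zero <| by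
      rw [real_inner_smul_left, Submodule.mem_orthogonal_singleton_iff_inner_right.1 y.2, mul_zero]
    refine (hC _).trans (mul_le_mul_of_nonneg_left ?_ hC0)
    exact Real.rpow_le_rpow_of_nonpos (by positivity) (by simpa using hy) (by simp)
  calc |radonTransform (fun y => h y) X ξ|
      ≤ ∫ y : (ℝ ∙ ξ)ᗮ, ‖h (X • ξ + y)‖ :=
        (norm_integral_le_integral_norm _).trans_eq' (Real.norm_eq_abs _).symm
    _ ≤ ∫ y : (ℝ ∙ ξ)ᗮ, C * (1 + ‖y‖) ^ (-(N : ℝ)) :=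
        integral_mono_of_nonneg (.of_forall fun _ => norm_nonneg _)
          ((integrable_one_add_norm (mod_cast (by omega))).const_mul C) (.of_forall hdecay)
    _ = _ := by
        rw [integral_const_mul, ((stdOrthonormalBasis ℝ (ℝ ∙ ξ)ᗮ).reindex
          (finCongr (by omega : _ = N - 1))).repr.integral_comp_norm fun r => (1 + r) ^ (-(N : ℝ))]

theorem integral_radonTransform_mul {ξ : ℝᴺ} (hξ : ‖ξ‖ = 1) (f : ℝᴺ → ℝ) (G : ℝ → ℝ)
    (hfG : Integrable fun x => f x * G ⟪ξ, x⟫) :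
    ∫ X, radonTransform f X ξ * G X = ∫ x, f x * G ⟪ξ, x⟫ := by
  rw [integral_eq_integral_integral_orthogonal hξ hfG]
  congr 1 with X
  simp only [fun y : (ℝ ∙ ξ)ᗮ => inner_smul_add_of_mem_orthogonal hξ X y.2, radonTransform,
    integral_mul_const]

instance : IsFiniteMeasure (sphereMeasure N) :=
  ⟨(ENNReal.inv_mul_le_one _).trans_lt ENNReal.one_lt_top⟩

theorem integrable_mul_radonTransform_inner {f g : ℝᴺ → ℝ} (hf : Integrable f)
    (hg : Continuous g) {M : ℝ} (hM : ∀ ξ : ℝᴺ, ‖ξ‖ = 1 → ∀ X, |radonTransform g X ξ| ≤ M)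
    (μ : Measure (sphere (0 : ℝᴺ) 1)) [IsFiniteMeasure μ] :
    Integrable (fun p : sphere (0 : ℝᴺ) 1 × ℝᴺ => f p.2 * radonTransform g ⟪(p.1 : ℝᴺ), p.2⟫ p.1)
      (μ.prod volume) := by
  have hR := (stronglyMeasurable_radonTransform hg).comp_measurable
    (g := fun p : sphere (0 : ℝᴺ) 1 × ℝᴺ => (⟪(p.1 : ℝᴺ), p.2⟫, p.1))
    (by fun_prop : Continuous _).measurable
  have hf' : AEStronglyMeasurable (fun p : sphere (0 : ℝᴺ) 1 × ℝᴺ => f p.2) (μ.prod volume) :=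
    hf.aestronglyMeasurable.comp_quasiMeasurePreserving Measure.quasiMeasurePreserving_snd
  refine ((hf.norm.const_mul M).comp_snd μ).mono' (hf'.mul hR.aestronglyMeasurable)
    (.of_forall fun p => ?_)
  rw [norm_mul, mul_comm, Real.norm_eq_abs (radonTransform _ _ _)]
  exact mul_le_mul_of_nonneg_right (hM _ (norm_eq_of_mem_sphere p.1) _) (norm_nonneg _)

end Radon

theorem radon_backProjection_duality_general (N : ℕ)
    (f h : SchwartzMap (EuclideanSpace ℝ (Fin N)) ℝ) :
    (∫ ξ : sphere (0 : EuclideanSpace ℝ (Fin N)) 1,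
        (∫ X : ℝ, radonTransform (fun y => f y) X (ξ : EuclideanSpace ℝ (Fin N)) *
            radonTransform (fun y => h y) X (ξ : EuclideanSpace ℝ (Fin N)))
          ∂(sphereMeasure N))
      = ∫ x : EuclideanSpace ℝ (Fin N),
          f x * backProjection (radonTransform (fun y => h y)) x := by
  obtain ⟨M, hM⟩ := exists_abs_radonTransform_le h
  have hInt := integrable_mul_radonTransform_inner f.integrable h.continuous hM (sphereMeasure N)
  calc _ = ∫ ξ : sphere (0 : EuclideanSpace ℝ (Fin N)) 1, (∫ x : EuclideanSpace ℝ (Fin N),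
          f x * radonTransform (fun y => h y) ⟪(ξ : EuclideanSpace ℝ (Fin N)), x⟫ ξ)
          ∂(sphereMeasure N) :=
        integral_congr_ae <| hInt.prod_right_ae.mono fun ξ hξ =>
          integral_radonTransform_mul (norm_eq_of_mem_sphere ξ) _ _ hξ
    _ = _ := integral_integral_swap hInt
    _ = _ := by simp_rw [backProjection, integral_const_mul]

theorem radon_backProjection_duality (N : ℕ) (hN : 2 ≤ N)
    (f h : SchwartzMap (EuclideanSpace ℝ (Fin N)) ℝ) :
    (∫ ξ : sphere (0 : EuclideanSpace ℝ (Fin N)) 1,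
        (∫ X : ℝ, radonTransform (fun y => f y) X (ξ : EuclideanSpace ℝ (Fin N)) *
            radonTransform (fun y => h y) X (ξ : EuclideanSpace ℝ (Fin N)))
          ∂(sphereMeasure N))
      = ∫ x : EuclideanSpace ℝ (Fin N),
          f x * backProjection (radonTransform (fun y => h y)) x :=
  radon_backProjection_duality_general N f h
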